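/- Let F be a field, V = F⁶, and q(x₁,…,x₆) = x₁x₂ + x₃x₄ + x₅x₆ the hyperbolic quadratic form of Witt index 3. Let F₀ be a proper subfield of F and ε ∈ F \ F₀. Then the 2-dimensional subspace ℓ spanned by w₁ = (1, 0, ε, 0, 0, 0) and w₂ = (0, ε, 0, −1, 0, 0) is totally singular for q, and ℓ contains no nonzero vector all of whose coordinate ratios lie in F₀; i.e. ℓ contains no point of PG(5, F₀). -/

import Mathlib

/-- In the hyperbolic quadric `Q⁺(5, F)`, the line spanned by
`w₁ = (1, 0, ε, 0, 0, 0)` and `w₂ = (0, ε, 0, -1, 0, 0)`, with `ε ∉ F₀` for a proper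
subfield `F₀`, is totally singular and contains no point of `PG(5, F₀)`. -/
theorem stmt12 {F : Type*} [Field F] (F₀ : Subfield F) (hproper : F₀ ≠ ⊤)
    (ε : F) (hε : ε ∉ F₀) :
    let q : (Fin 6 → F) → F := fun x => x 0 * x 1 + x 2 * x 3 + x 4 * x 5
    let w₁ : Fin 6 → F := ![1, 0, ε, 0, 0, 0]
    let w₂ : Fin 6 → F := ![0, ε, 0, -1, 0, 0]
    LinearIndependent F ![w₁, w₂] ∧
    (∀ w ∈ Submodule.span F {w₁, w₂}, q w = 0) ∧
    ∀ w ∈ Submodule.span F {w₁, w₂}, w ≠ 0 →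
      ∀ c : F, c ≠ 0 → ∃ i : Fin 6, c * w i ∉ F₀ := by
  intro q w₁ w₂
  have hε0 : ε ≠ 0 := fun h => hε (h ▸ F₀.zero_mem)
  refine ⟨?_, ?_, ?_⟩
  · rw [LinearIndependent.pair_iff]
    intro s t hst
    have h0 := congrFun hst 0
    have h3 := congrFun hst 3
    simp [w₁, w₂] at h0 h3
    exact ⟨h0, h3⟩
  · intro w hw
    rcases Submodule.mem_span_pair.mp hw with ⟨a, b, rfl⟩
    simp [q, w₁, w₂]
    ring
  · intro w hw hw0 c hc
    rcases Submodule.mem_span_pair.mp hw with ⟨a, b, rfl⟩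
    by_contra h
    push_neg at h
    have h0 := h 0
    have h1 := h 1
    have h2 := h 2
    have h3 := h 3
    simp [w₁, w₂] at h0 h1 h2 h3
    rcases eq_or_ne a 0 with ha | ha
    · have hb : b ≠ 0 := by
        intro hb
        exact hw0 (by simp [ha, hb])
      have hcb : -(c * b) ∈ F₀ := by simpa using h3
      have hcb' : c * b ∈ F₀ := by simpa using F₀.neg_mem hcb
      have : (c * b)⁻¹ * (c * (b * ε)) ∈ F₀ := F₀.mul_mem (F₀.inv_mem hcb') h1
      rw [show (c * b)⁻¹ * (c * (b * ε)) = ε by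
        field_simp] at this
      exact hε this
    · have : (c * a)⁻¹ * (c * (a * ε)) ∈ F₀ := F₀.mul_mem (F₀.inv_mem h0) h2
      rw [show (c * a)⁻¹ * (c * (a * ε)) = ε by
        field_simp] at this
      exact hε this
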